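/- arXiv:2111.07976 — 7 statements merged into one kernel-verified Lean document; each statement's English description precedes it below -/
import Mathlib

section
/- Let H be an n×n upper Hessenberg matrix and p a polynomial of degree at most k. Then for 0 ≤ j ≤ k-1, the (n, n-j) entry of p(H) equals the (k, k-j) entry of p applied to the bottom-right k×k corner of H; the (n, n-k) entry of p(H) equals (leading coefficient of p) times the product h_{n-k,n-k-1}···h_{n,n-1} of the last k subdiagonal entries; and the (n, n-j) entry of p(H) is zero for j ≥ k+1. -/
open Matrix Polynomial

def IsHessenberg {n : ℕ} (H : Matrix (Fin n) (Fin n) ℂ) : Prop :=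
  ∀ i j : Fin n, (j : ℕ) + 1 < (i : ℕ) → H i j = 0

def corner {n : ℕ} (k : ℕ) (hk : k ≤ n) (H : Matrix (Fin n) (Fin n) ℂ) :
    Matrix (Fin k) (Fin k) ℂ :=
  fun i j => H ⟨n - k + i, by have := i.2; omega⟩ ⟨n - k + j, by have := j.2; omega⟩

lemma lemA {n : ℕ} (H : Matrix (Fin n) (Fin n) ℂ) (hH : IsHessenberg H) (m : ℕ) :
    ∀ (i c : Fin n), (c : ℕ) + m < (i : ℕ) → (H ^ m) i c = 0 := by
  induction m with
  | zero =>
    intro i c h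
    rw [pow_zero, Matrix.one_apply_ne (Fin.ne_of_val_ne (by omega))]
  | succ m ih =>
    intro i c h
    rw [pow_succ, Matrix.mul_apply]
    apply Finset.sum_eq_zero
    intro t _
    by_cases ht : (t : ℕ) + m < (i : ℕ)
    · rw [ih i t ht, zero_mul]
    · rw [hH t c (by omega), mul_zero]

lemma lemB {n : ℕ} (H : Matrix (Fin n) (Fin n) ℂ) (hH : IsHessenberg H) (m : ℕ) :
    ∀ (c i : Fin n) (h : (c : ℕ) + m = (i : ℕ)),
    (H ^ m) i c = ∏ l : Fin m, H ⟨(c : ℕ) + l + 1, by have := l.2; have := i.2; omega⟩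
      ⟨(c : ℕ) + l, by have := l.2; have := i.2; omega⟩ := by
  induction m with
  | zero =>
    intro c i h
    have : i = c := Fin.ext (by omega)
    subst this
    simp
  | succ m ih =>
    intro c i h
    rw [pow_succ', Matrix.mul_apply]
    have hi : 1 ≤ (i : ℕ) := by omega
    set t0 : Fin n := ⟨(i : ℕ) - 1, by have := i.2; omega⟩ with ht0
    rw [Finset.sum_eq_single t0 ?h0 (by simp)]
    · rw [ih c t0 (by simp [ht0]; omega)]
      rw [Fin.prod_univ_castSucc]
      rw [mul_comm]
      congr 1
      · congr 1 <;> exact Fin.ext (by simp [ht0]; omega)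
    · intro t _ htne
      by_cases h1 : (t : ℕ) + 1 < (i : ℕ)
      · rw [hH i t h1, zero_mul]
      · have : (c : ℕ) + m < (t : ℕ) := by
          have : (t : ℕ) ≠ (i : ℕ) - 1 := fun e => htne (Fin.ext (by simp [ht0, e]))
          omega
        rw [lemA H hH m t c this, mul_zero]

lemma lemC {n k : ℕ} (hkn : k ≤ n) (H : Matrix (Fin n) (Fin n) ℂ) (hH : IsHessenberg H)
    (m : ℕ) : ∀ (a b : Fin k), m ≤ (a : ℕ) + 1 →
    (H ^ m) ⟨n - k + a, by have := a.2; omega⟩ ⟨n - k + b, by have := b.2; omega⟩ =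
      ((corner k hkn H) ^ m) a b := by
  induction m with
  | zero =>
    intro a b _
    rcases eq_or_ne a b with h | h
    · subst h; simp [Matrix.one_apply]
    · rw [pow_zero, pow_zero, Matrix.one_apply_ne h, Matrix.one_apply_ne ?_]
      simp only [ne_eq, Fin.mk.injEq]
      simp only [Fin.ne_iff_vne] at h
      omega
  | succ m ih =>
    intro a b hm
    rcases Nat.eq_zero_or_pos m with hm0 | hm1
    · subst hm0
      rw [pow_one, pow_one]
      rfl
    · have ha : 1 ≤ (a : ℕ) := by omega
      rw [pow_succ', pow_succ', Matrix.mul_apply, Matrix.mul_apply]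
      set emb : Fin k ↪ Fin n :=
        ⟨fun a' => ⟨n - k + a', by have := a'.2; omega⟩,
         fun x y hxy => Fin.ext (by
           have := congrArg Fin.val hxy; simp at this; omega)⟩ with hemb
      rw [← Finset.sum_subset (Finset.subset_univ (Finset.univ.map emb)) ?hz]
      · rw [Finset.sum_map]
        apply Finset.sum_congr rfl
        intro a' _
        by_cases hlt : (a' : ℕ) + 1 < (a : ℕ)
        · have h1 : H ⟨n - k + a, by have := a.2; omega⟩ (emb a') = 0 := by
            apply hH; show (n - k + (a' : ℕ)) + 1 < n - k + (a : ℕ); omega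
          have h2 : corner k hkn H a a' = 0 := by
            apply hH; simp [corner]; omega
          rw [show corner k hkn H a a' = 0 from h2]
          simp only [hemb, Function.Embedding.coeFn_mk] at h1 ⊢
          rw [h1, zero_mul, zero_mul]
        · have : H ⟨n - k + a, by have := a.2; omega⟩ (emb a') = corner k hkn H a a' := rfl
          rw [this]
          exact congrArg (corner k hkn H a a' * ·) (ih a' b (by omega))
      · intro t _ htn
        have htk : (t : ℕ) < n - k := by
          by_contra hge
          apply htn
          simp only [Finset.mem_map, Finset.mem_univ, true_and, hemb]
          exact ⟨⟨(t : ℕ) - (n - k), by have := t.2; omega⟩,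
            Fin.ext (by show n - k + ((t : ℕ) - (n - k)) = (t : ℕ); omega)⟩
        rw [hH _ t (by simp; omega), zero_mul]

noncomputable def subdiagProd {n : ℕ} (k : ℕ) (hk : k + 1 ≤ n) (H : Matrix (Fin n) (Fin n) ℂ) : ℂ :=
  ∏ i : Fin k, H ⟨n - k + i, by have := i.2; omega⟩ ⟨n - k - 1 + i, by have := i.2; omega⟩

/-- Entries of the last row of `p(H)` for an upper Hessenberg matrix `H`. -/
theorem stmt_0 {n k : ℕ} (hk : 1 ≤ k) (hkn : k + 1 ≤ n)
    (H : Matrix (Fin n) (Fin n) ℂ) (hH : IsHessenberg H)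
    (p : Polynomial ℂ) (hp : p.natDegree = k) :
    (∀ j : ℕ, ∀ hj : j ≤ k - 1,
      (Polynomial.aeval H p) ⟨n - 1, by omega⟩ ⟨n - 1 - j, by omega⟩ =
        (Polynomial.aeval (corner k (by omega) H) p) ⟨k - 1, by omega⟩ ⟨k - 1 - j, by omega⟩) ∧
    (Polynomial.aeval H p) ⟨n - 1, by omega⟩ ⟨n - 1 - k, by omega⟩ =
      p.leadingCoeff * subdiagProd k hkn H ∧
    (∀ j : ℕ, k + 1 ≤ j → ∀ hj : j ≤ n - 1,
      (Polynomial.aeval H p) ⟨n - 1, by omega⟩ ⟨n - 1 - j, by omega⟩ = 0) := by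
  have hkn' : k ≤ n := by omega
  have hsum : ∀ (r c : Fin n), (Polynomial.aeval H p) r c =
      ∑ m ∈ Finset.range (k + 1), p.coeff m * (H ^ m) r c := by
    intro r c
    rw [Polynomial.aeval_eq_sum_range, hp]
    simp [Matrix.sum_apply]
  have hsumC : ∀ (r c : Fin k), (Polynomial.aeval (corner k hkn' H) p) r c =
      ∑ m ∈ Finset.range (k + 1), p.coeff m * ((corner k hkn' H) ^ m) r c := by
    intro r c
    rw [Polynomial.aeval_eq_sum_range, hp]
    simp [Matrix.sum_apply]
  refine ⟨?_, ?_, ?_⟩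
  · intro j hj
    rw [hsum, hsumC]
    apply Finset.sum_congr rfl
    intro m hm
    rw [Finset.mem_range] at hm
    congr 1
    have e1 : (⟨n - 1, by omega⟩ : Fin n) = ⟨n - k + (k - 1), by omega⟩ :=
      Fin.ext (show n - 1 = n - k + (k - 1) by omega)
    have e2 : (⟨n - 1 - j, by omega⟩ : Fin n) = ⟨n - k + (k - 1 - j), by omega⟩ :=
      Fin.ext (show n - 1 - j = n - k + (k - 1 - j) by omega)
    rw [e1, e2]
    exact lemC hkn' H hH m ⟨k - 1, by omega⟩ ⟨k - 1 - j, by omega⟩ (by simp; omega)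
  · rw [hsum, Finset.sum_range_succ]
    have hz : ∑ m ∈ Finset.range k,
        p.coeff m * (H ^ m) ⟨n - 1, by omega⟩ ⟨n - 1 - k, by omega⟩ = 0 := by
      apply Finset.sum_eq_zero
      intro m hm
      rw [Finset.mem_range] at hm
      rw [lemA H hH m _ _ (by simp; omega), mul_zero]
    rw [hz, zero_add]
    rw [lemB H hH k ⟨n - 1 - k, by omega⟩ ⟨n - 1, by omega⟩ (by simp; omega)]
    congr 1
    · rw [Polynomial.leadingCoeff, hp]
    · rw [subdiagProd]
      apply Finset.prod_congr rfl
      intro l _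
      congr 1 <;> exact Fin.ext (by have := l.2; simp; omega)
  · intro j hjk hj
    rw [hsum]
    apply Finset.sum_eq_zero
    intro m hm
    rw [Finset.mem_range] at hm
    rw [lemA H hH m _ _ (by simp; omega), mul_zero]
end

section
/- Let H be an n×n upper Hessenberg matrix and let ψ_k(H) = |h_{n-k,n-k-1}···h_{n,n-1}|^{1/k} be the geometric mean of its last k subdiagonal entries. Then ψ_k(H) = min over monic polynomials p of degree k of ‖e_n* p(H)‖^{1/k}, and the minimum is attained by the characteristic polynomial of the bottom-right k×k corner of H. -/
open Matrix Polynomial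

/-- The potential: geometric mean of the last `k` subdiagonal entries. -/
noncomputable def psi {n : ℕ} (k : ℕ) (hk : k + 1 ≤ n) (H : Matrix (Fin n) (Fin n) ℂ) : ℝ :=
  ‖subdiagProd k hk H‖ ^ ((k : ℝ)⁻¹)

/-- Euclidean norm of the `i`-th row of `M`. -/
noncomputable def rowNorm {n : ℕ} (M : Matrix (Fin n) (Fin n) ℂ) (i : Fin n) : ℝ :=
  Real.sqrt (∑ j, ‖M i j‖ ^ 2)

/-- Powers of a Hessenberg matrix vanish below the `m`-th subdiagonal. -/
lemma hess_pow {n : ℕ} {H : Matrix (Fin n) (Fin n) ℂ} (hH : IsHessenberg H) :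
    ∀ m : ℕ, ∀ i j : Fin n, (j : ℕ) + m < (i : ℕ) → (H ^ m) i j = 0 := by
  intro m
  induction m with
  | zero =>
    intro i j h
    simp only [pow_zero, Matrix.one_apply]
    rw [if_neg]
    intro e; subst e; omega
  | succ m ih =>
    intro i j h
    rw [pow_succ, Matrix.mul_apply]
    apply Finset.sum_eq_zero
    intro a _
    rcases lt_or_ge ((a : ℕ) + m) (i : ℕ) with ha | ha
    · rw [ih i a ha, zero_mul]
    · rw [hH a j (by omega), mul_zero]

lemma subdiagProd_succ {n : ℕ} (m : ℕ) (hm : m + 2 ≤ n) (H : Matrix (Fin n) (Fin n) ℂ) :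
    subdiagProd (m + 1) (by omega) H
      = H ⟨n - 1 - m, by omega⟩ ⟨n - 2 - m, by omega⟩ * subdiagProd m (by omega) H := by
  unfold subdiagProd
  rw [Fin.prod_univ_succ]
  congr 1
  · congr 1 <;> exact Fin.ext (by simp; omega)
  · apply Finset.prod_congr rfl
    intro i _
    congr 1 <;> exact Fin.ext (by simp [Fin.val_succ]; omega)

/-- The pivot entry of `H ^ m` is the product of the last `m` subdiagonal entries. -/
lemma hess_pow_subdiag {n : ℕ} {H : Matrix (Fin n) (Fin n) ℂ} (hH : IsHessenberg H) :
    ∀ m : ℕ, ∀ hm : m + 1 ≤ n,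
      (H ^ m) ⟨n - 1, by omega⟩ ⟨n - 1 - m, by omega⟩ = subdiagProd m hm H := by
  intro m
  induction m with
  | zero =>
    intro hm
    simp [subdiagProd, Matrix.one_apply]
  | succ m ih =>
    intro hm
    rw [pow_succ, Matrix.mul_apply]
    rw [Finset.sum_eq_single (⟨n - 1 - m, by omega⟩ : Fin n)]
    · rw [ih (by omega), subdiagProd_succ m hm H, mul_comm]
      have e1 : (⟨n - 1 - (m + 1), by omega⟩ : Fin n) = ⟨n - 2 - m, by omega⟩ :=
        Fin.ext (show n - 1 - (m + 1) = n - 2 - m by omega)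
      rw [e1]
    · intro a _ ha
      have ha' : (a : ℕ) ≠ n - 1 - m := fun e => ha (Fin.ext e)
      rcases lt_or_ge ((a : ℕ) + m) (n - 1) with h2 | h2
      · rw [hess_pow hH m _ a h2, zero_mul]
      · rw [hH a _ (show n - 1 - (m + 1) + 1 < (a : ℕ) by omega), mul_zero]
    · intro h; exact absurd (Finset.mem_univ _) h

/-- In the last row, low powers of `H` agree with powers of the trailing corner block. -/
lemma hess_pow_corner {n k : ℕ} (hk : 1 ≤ k) (hkn : k + 1 ≤ n)
    {H : Matrix (Fin n) (Fin n) ℂ} (hH : IsHessenberg H) :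
    ∀ m : ℕ, m ≤ k → ∀ j : Fin k,
      (H ^ m) ⟨n - 1, by have := hkn; omega⟩ ⟨n - k + j, by have := j.2; omega⟩
        = ((corner k (by have := hkn; omega) H) ^ m) ⟨k - 1, by have := hkn; omega⟩ j := by
  intro m
  induction m with
  | zero =>
    intro _ j
    simp only [pow_zero, Matrix.one_apply, Fin.ext_iff]
    have hj := j.2
    by_cases hc : (j : ℕ) = k - 1
    · rw [if_pos (by omega), if_pos (by omega)]
    · rw [if_neg (by omega), if_neg (by omega)]
  | succ m ih =>
    intro hm j
    rw [pow_succ, pow_succ, Matrix.mul_apply, Matrix.mul_apply]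
    have key : ∀ a : Fin n, (a : ℕ) < n - k →
        (H ^ m) ⟨n - 1, by omega⟩ a * H a ⟨n - k + j, by have := j.2; omega⟩ = 0 := by
      intro a ha
      rw [hess_pow hH m _ a (show (a : ℕ) + m < n - 1 by omega), zero_mul]
    let e : Fin k ↪ Fin n :=
      ⟨fun b => ⟨n - k + b, by have := b.2; omega⟩,
        fun b b' h => Fin.ext (by
          have h2 : n - k + (b : ℕ) = n - k + (b' : ℕ) := Fin.ext_iff.mp h
          omega)⟩
    rw [show (Finset.univ : Finset (Fin n)) = Finset.univ \ Finset.univ.map e ∪ Finset.univ.map e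
        from by simp [Finset.sdiff_union_of_subset]]
    rw [Finset.sum_union (Finset.sdiff_disjoint)]
    rw [Finset.sum_eq_zero (fun a ha => by
      simp only [Finset.mem_sdiff, Finset.mem_map, Finset.mem_univ, true_and] at ha
      apply key a
      by_contra hcon
      push_neg at hcon
      exact ha ⟨⟨(a : ℕ) - (n - k), by have := a.2; omega⟩,
        Fin.ext (show n - k + ((a : ℕ) - (n - k)) = (a : ℕ) by omega)⟩), zero_add]
    rw [Finset.sum_map]
    apply Finset.sum_congr rfl
    intro b _
    simp only [e, Function.Embedding.coeFn_mk]
    refine (congrArg (· * _) (ih (by omega) b)).trans ?_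
    rfl

lemma aeval_entry {n : ℕ} (H : Matrix (Fin n) (Fin n) ℂ) (p : Polynomial ℂ) (i j : Fin n) :
    (Polynomial.aeval H p) i j
      = ∑ m ∈ Finset.range (p.natDegree + 1), p.coeff m * (H ^ m) i j := by
  rw [aeval_eq_sum_range, Matrix.sum_apply]
  apply Finset.sum_congr rfl
  intro m _
  rw [Matrix.smul_apply, smul_eq_mul]

/-- The key pivot entry equals the subdiagonal product for any monic polynomial of degree k. -/
lemma key_entry {n k : ℕ} (hk : 1 ≤ k) (hkn : k + 1 ≤ n)
    {H : Matrix (Fin n) (Fin n) ℂ} (hH : IsHessenberg H)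
    {p : Polynomial ℂ} (hmono : p.Monic) (hdeg : p.natDegree = k) :
    (Polynomial.aeval H p) ⟨n - 1, by have := hkn; omega⟩ ⟨n - 1 - k, by have := hkn; omega⟩ = subdiagProd k hkn H := by
  rw [aeval_entry]
  simp only [hdeg]
  rw [Finset.sum_eq_single k]
  · have h1 : p.coeff k = 1 := by
      have := hmono.coeff_natDegree
      rwa [hdeg] at this
    rw [h1, one_mul, hess_pow_subdiag hH k hkn]
  · intro m hm hne
    have hm' : m < k := by
      simp only [Finset.mem_range] at hm; omega
    rw [hess_pow hH m _ _ (show (n - 1 - k : ℕ) + m < n - 1 by omega), mul_zero]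
  · intro h; exact absurd (Finset.mem_range.mpr (by omega)) h

/-- Entries of `q(H)` in the last row and trailing columns vanish when `q` kills the corner. -/
lemma entry_block_zero {n k : ℕ} (hk : 1 ≤ k) (hkn : k + 1 ≤ n)
    {H : Matrix (Fin n) (Fin n) ℂ} (hH : IsHessenberg H)
    (q : Polynomial ℂ) (hqd : q.natDegree = k)
    (hq0 : Polynomial.aeval (corner k (by have := hkn; omega : k ≤ n) H) q = 0)
    (j : Fin n) (hj : n - k ≤ (j : ℕ)) :
    (Polynomial.aeval H q) ⟨n - 1, by have := hkn; omega⟩ j = 0 := by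
  have hjlt := j.2
  obtain ⟨j', hjeq⟩ : ∃ j' : Fin k, j = ⟨n - k + (j' : ℕ), by have := j'.2; omega⟩ :=
    ⟨⟨(j : ℕ) - (n - k), by omega⟩, Fin.ext (show (j : ℕ) = n - k + ((j : ℕ) - (n - k)) by omega)⟩
  rw [hjeq]
  rw [aeval_entry]
  simp only [hqd]
  have step : ∀ m ∈ Finset.range (k + 1),
      q.coeff m * (H ^ m) ⟨n - 1, by omega⟩ ⟨n - k + (j' : ℕ), by have := j'.2; omega⟩
        = q.coeff m * ((corner k (by omega : k ≤ n) H) ^ m) ⟨k - 1, by omega⟩ j' := by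
    intro m hm
    simp only [Finset.mem_range] at hm
    rw [hess_pow_corner hk hkn hH m (by omega) j']
  rw [Finset.sum_congr rfl step]
  have hc := aeval_entry (corner k (by omega : k ≤ n) H) q ⟨k - 1, by omega⟩ j'
  rw [hq0] at hc
  simp only [hqd, Matrix.zero_apply] at hc
  rw [← hc]

/-- Variational formula for the potential `ψ_k`. -/
theorem stmt_1 {n k : ℕ} (hk : 1 ≤ k) (hkn : k + 1 ≤ n)
    (H : Matrix (Fin n) (Fin n) ℂ) (hH : IsHessenberg H) :
    (∀ p : Polynomial ℂ, p.Monic → p.natDegree = k →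
      psi k hkn H ≤ rowNorm (Polynomial.aeval H p) ⟨n - 1, by omega⟩ ^ ((k : ℝ)⁻¹)) ∧
    psi k hkn H =
      rowNorm (Polynomial.aeval H (Matrix.charpoly (corner k (by omega) H))) ⟨n - 1, by omega⟩
        ^ ((k : ℝ)⁻¹) := by
  constructor
  · intro p hmono hdeg
    apply Real.rpow_le_rpow (norm_nonneg _) ?_ (by positivity)
    have hb : ‖(Polynomial.aeval H p) ⟨n - 1, by omega⟩ ⟨n - 1 - k, by omega⟩‖
        = ‖subdiagProd k hkn H‖ := by
      rw [key_entry hk hkn hH hmono hdeg]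
    calc ‖subdiagProd k hkn H‖
        = Real.sqrt (‖(Polynomial.aeval H p) ⟨n - 1, by omega⟩ ⟨n - 1 - k, by omega⟩‖ ^ 2) := by
          rw [Real.sqrt_sq (norm_nonneg _), hb]
      _ ≤ rowNorm (Polynomial.aeval H p) ⟨n - 1, by omega⟩ := by
          apply Real.sqrt_le_sqrt
          exact Finset.single_le_sum
            (f := fun j => ‖(Polynomial.aeval H p) ⟨n - 1, by omega⟩ j‖ ^ 2)
            (fun j _ => by positivity) (Finset.mem_univ _)
  · have hqm : (Matrix.charpoly (corner k (by omega : k ≤ n) H)).Monic :=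
      Matrix.charpoly_monic _
    have hqd : (Matrix.charpoly (corner k (by omega : k ≤ n) H)).natDegree = k := by
      rw [Matrix.charpoly_natDegree_eq_dim, Fintype.card_fin]
    have hzero : ∀ j : Fin n, j ≠ ⟨n - 1 - k, by omega⟩ →
        (Polynomial.aeval H (Matrix.charpoly (corner k (by omega : k ≤ n) H)))
          ⟨n - 1, by omega⟩ j = 0 := by
      intro j hj
      have hj' : (j : ℕ) ≠ n - 1 - k := fun e => hj (Fin.ext e)
      rcases lt_or_ge (j : ℕ) (n - 1 - k) with hlt | hge
      · rw [aeval_entry]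
        simp only [hqd]
        apply Finset.sum_eq_zero
        intro m hm
        simp only [Finset.mem_range] at hm
        rw [hess_pow hH m _ _ (show (j : ℕ) + m < n - 1 by omega), mul_zero]
      · exact entry_block_zero hk hkn hH _ hqd (Matrix.aeval_self_charpoly _) j (by omega)
    have hkey := key_entry hk hkn hH hqm hqd
    have hrow : rowNorm (Polynomial.aeval H (Matrix.charpoly (corner k (by omega : k ≤ n) H)))
        ⟨n - 1, by omega⟩ = ‖subdiagProd k hkn H‖ := by
      unfold rowNorm
      rw [Finset.sum_eq_single (⟨n - 1 - k, by omega⟩ : Fin n)]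
      · rw [hkey, Real.sqrt_sq (norm_nonneg _)]
      · intro j _ hj
        rw [hzero j hj]
        simp
      · intro h; exact absurd (Finset.mem_univ _) h
    rw [hrow]
    rfl
end

section
/- Let H be a diagonalizable n×n matrix with H = V D V^{-1}, where ‖V‖·‖V^{-1}‖ = κ. Define the random variable Z supported on the eigenvalues λ_i of H with P[Z = λ_i] = |e_n* V e_i|² / ‖e_n* V‖². Then for any function f defined on the eigenvalues of H, ‖e_n* f(H)‖/κ ≤ E[|f(Z)|²]^{1/2} ≤ κ · ‖e_n* f(H)‖. -/
open Matrix

/-- `ℓ²→ℓ²` operator norm of a matrix. -/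
noncomputable def opNorm {n : ℕ} (M : Matrix (Fin n) (Fin n) ℂ) : ℝ :=
  ‖Matrix.toEuclideanCLM (𝕜 := ℂ) M‖

set_option synthInstance.maxHeartbeats 1000000 in
set_option maxHeartbeats 1000000 in
lemma opNorm_conjTranspose {n : ℕ} (M : Matrix (Fin n) (Fin n) ℂ) :
    opNorm Mᴴ = opNorm M := by
  unfold opNorm
  rw [show Mᴴ = star M from rfl, map_star]
  rw [ContinuousLinearMap.star_eq_adjoint]
  exact ContinuousLinearMap.adjoint.norm_map _

lemma sqrt_vecMul_le {n : ℕ} (M : Matrix (Fin n) (Fin n) ℂ) (x : Fin n → ℂ) :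
    Real.sqrt (∑ j, ‖(x ᵥ* M) j‖ ^ 2) ≤ Real.sqrt (∑ i, ‖x i‖ ^ 2) * opNorm M := by
  have h1 : Real.sqrt (∑ j, ‖(x ᵥ* M) j‖ ^ 2) =
      ‖((WithLp.equiv 2 (Fin n → ℂ)).symm (Mᴴ *ᵥ star x) : EuclideanSpace ℂ (Fin n))‖ := by
    rw [EuclideanSpace.norm_eq, ← star_vecMul]
    exact congrArg Real.sqrt (Finset.sum_congr rfl fun j _ => by simp)
  have h2 : ‖((WithLp.equiv 2 (Fin n → ℂ)).symm (star x) : EuclideanSpace ℂ (Fin n))‖ =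
      Real.sqrt (∑ i, ‖x i‖ ^ 2) := by
    rw [EuclideanSpace.norm_eq]
    exact congrArg Real.sqrt (Finset.sum_congr rfl fun j _ => by simp)
  have h3 := (toEuclideanCLM (𝕜 := ℂ) Mᴴ).le_opNorm
      ((WithLp.equiv 2 (Fin n → ℂ)).symm (star x))
  rw [show (toEuclideanCLM (𝕜 := ℂ) Mᴴ) ((WithLp.equiv 2 (Fin n → ℂ)).symm (star x)) =
      (WithLp.equiv 2 (Fin n → ℂ)).symm (Mᴴ *ᵥ star x) from rfl] at h3
  rw [h1]
  calc _ ≤ ‖toEuclideanCLM (𝕜 := ℂ) Mᴴ‖ *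
      ‖((WithLp.equiv 2 (Fin n → ℂ)).symm (star x) : EuclideanSpace ℂ (Fin n))‖ := h3
    _ = _ := by
      rw [h2, show ‖toEuclideanCLM (𝕜 := ℂ) Mᴴ‖ = opNorm Mᴴ from rfl,
        opNorm_conjTranspose]; ring

/-- Approximate functional calculus: the spectral-measure expectation
`E[|f(Z_H)|²]^{1/2}` agrees with `‖e_n* f(H)‖` up to a factor `κ_V`. -/
theorem stmt_4 {n : ℕ} (hn : 1 ≤ n)
    (H V : Matrix (Fin n) (Fin n) ℂ) (hV : IsUnit V)
    (lam : Fin n → ℂ) (hdiag : H = V * Matrix.diagonal lam * V⁻¹)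
    (κ : ℝ) (hκ : κ = opNorm V * opNorm V⁻¹)
    (f : ℂ → ℂ) :
    rowNorm (V * Matrix.diagonal (fun i => f (lam i)) * V⁻¹) ⟨n - 1, by omega⟩ / κ ≤
      Real.sqrt (∑ i, (‖V ⟨n - 1, by omega⟩ i‖ ^ 2 / ∑ j, ‖V ⟨n - 1, by omega⟩ j‖ ^ 2) *
        ‖f (lam i)‖ ^ 2) ∧
    Real.sqrt (∑ i, (‖V ⟨n - 1, by omega⟩ i‖ ^ 2 / ∑ j, ‖V ⟨n - 1, by omega⟩ j‖ ^ 2) *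
        ‖f (lam i)‖ ^ 2) ≤
      κ * rowNorm (V * Matrix.diagonal (fun i => f (lam i)) * V⁻¹) ⟨n - 1, by omega⟩ := by
  subst hκ
  set i0 : Fin n := ⟨n - 1, by omega⟩ with hi0
  set A : Matrix (Fin n) (Fin n) ℂ := V * Matrix.diagonal (fun i => f (lam i)) * V⁻¹ with hA
  set S : ℝ := ∑ j, ‖V i0 j‖ ^ 2 with hS
  set a : ℝ := rowNorm A i0 with ha
  set s : ℝ := Real.sqrt S with hs
  set b : ℝ := Real.sqrt (∑ i, ‖V i0 i * f (lam i)‖ ^ 2) with hb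
  have ha0 : 0 ≤ a := Real.sqrt_nonneg _
  have hb0 : 0 ≤ b := Real.sqrt_nonneg _
  have hs0 : 0 ≤ s := Real.sqrt_nonneg _
  have hnV : 0 ≤ opNorm V := norm_nonneg _
  have hnVi : 0 ≤ opNorm V⁻¹ := norm_nonneg _
  -- the middle quantity equals b / s
  have hmid : Real.sqrt (∑ i, (‖V i0 i‖ ^ 2 / S) * ‖f (lam i)‖ ^ 2) = b / s := by
    have : (∑ i, (‖V i0 i‖ ^ 2 / S) * ‖f (lam i)‖ ^ 2)
        = (∑ i, ‖V i0 i * f (lam i)‖ ^ 2) / S := by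
      rw [Finset.sum_div]
      exact Finset.sum_congr rfl fun i _ => by rw [norm_mul, mul_pow]; ring
    rw [this, Real.sqrt_div (Finset.sum_nonneg fun i _ => by positivity)]
  -- row of A
  have hrowA : A i0 = (fun k => V i0 k * f (lam k)) ᵥ* V⁻¹ := by
    funext j
    have h' : A i0 j = ∑ k, V i0 k * f (lam k) * V⁻¹ k j := by
      rw [hA, Matrix.mul_apply]
      refine Finset.sum_congr rfl fun k _ => ?_
      rw [Matrix.mul_diagonal]
    rw [h', Matrix.vecMul, dotProduct]
  have fact1 : a ≤ b * opNorm V⁻¹ := by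
    rw [ha, rowNorm, hrowA]; exact sqrt_vecMul_le _ _
  have hVV : V⁻¹ * V = 1 := Matrix.nonsing_inv_mul V ((Matrix.isUnit_iff_isUnit_det V).mp hV)
  have hrowAV : (fun k => V i0 k * f (lam k)) = A i0 ᵥ* V := by
    have : A * V = V * Matrix.diagonal (fun i => f (lam i)) := by
      rw [hA, Matrix.mul_assoc, hVV, Matrix.mul_one]
    funext k
    have := congrFun (congrFun this i0) k
    rw [Matrix.mul_apply] at this
    simp only [Matrix.mul_diagonal] at this
    rw [← this, Matrix.vecMul, dotProduct]
  have fact2 : b ≤ a * opNorm V := by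
    have he : (∑ i, ‖V i0 i * f (lam i)‖ ^ 2) = ∑ i, ‖(A i0 ᵥ* V) i‖ ^ 2 :=
      Finset.sum_congr rfl fun i _ => by rw [congrFun hrowAV i]
    rw [hb, he, ha, rowNorm]; exact sqrt_vecMul_le _ _
  -- basis vector facts
  have hsingle : (∑ i, ‖(Pi.single i0 1 : Fin n → ℂ) i‖ ^ 2) = 1 := by
    simp [Pi.single_apply, apply_ite (norm : ℂ → ℝ), Finset.sum_ite_eq']
  have hrV : V i0 = (Pi.single i0 1 : Fin n → ℂ) ᵥ* V := by
    funext j; simp [Matrix.vecMul, dotProduct, Pi.single_apply]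
  have fact3 : s ≤ opNorm V := by
    have := sqrt_vecMul_le V (Pi.single i0 1)
    rw [hsingle, Real.sqrt_one, one_mul, ← hrV] at this
    simpa [hs, hS] using this
  have hsVi : (Pi.single i0 1 : Fin n → ℂ) = V i0 ᵥ* V⁻¹ := by
    have h1 : V * V⁻¹ = 1 := Matrix.mul_nonsing_inv V ((Matrix.isUnit_iff_isUnit_det V).mp hV)
    funext j
    have := congrFun (congrFun h1 i0) j
    rw [Matrix.mul_apply] at this
    rw [Matrix.vecMul, dotProduct]
    simp only [this, Matrix.one_apply, Pi.single_apply]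
    by_cases h : j = i0 <;> simp [h, eq_comm]
  have fact4 : 1 ≤ s * opNorm V⁻¹ := by
    have := sqrt_vecMul_le V⁻¹ (V i0)
    rw [← hsVi, hsingle, Real.sqrt_one] at this
    simpa [hs, hS] using this
  have hspos : 0 < s := by nlinarith
  have hκpos : 0 < opNorm V * opNorm V⁻¹ := by nlinarith
  rw [hmid]
  constructor
  · rw [div_le_div_iff₀ hκpos hspos]
    nlinarith
  · rw [div_le_iff₀ hspos]
    nlinarith
end

section
/- Let H be an n×n upper Hessenberg matrix and Q a unitary matrix arising from a QR decomposition p(H) = QR of p(H) for a polynomial p, with R upper triangular with positive diagonal and p(H) invertible. Then H' = Q* H Q is upper Hessenberg. -/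
open Matrix Polynomial

/-- A QR step preserves the Hessenberg structure. -/
theorem stmt_11 {n : ℕ} (H Q R : Matrix (Fin n) (Fin n) ℂ) (hH : IsHessenberg H)
    (p : Polynomial ℂ)
    (hQ : Q ∈ Matrix.unitaryGroup (Fin n) ℂ)
    (hR : ∀ i j : Fin n, j < i → R i j = 0)
    (hRpos : ∀ i : Fin n, (R i i).im = 0 ∧ 0 < (R i i).re)
    (hinv : IsUnit (Polynomial.aeval H p))
    (hQR : Polynomial.aeval H p = Q * R) :
    IsHessenberg (Qᴴ * H * Q) := by
  set A := Polynomial.aeval H p with hA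
  have hQ1 : Qᴴ * Q = 1 := (Matrix.mem_unitaryGroup_iff'.mp hQ)
  have hQ2 : Q * Qᴴ = 1 := (Matrix.mem_unitaryGroup_iff.mp hQ)
  have hQsu : IsUnit Qᴴ := by
    apply (Matrix.isUnit_iff_isUnit_det _).mpr
    apply IsUnit.of_mul_eq_one Q.det
    rw [← Matrix.det_mul, hQ1, Matrix.det_one]
  have hRu : IsUnit R := by
    have : R = Qᴴ * A := by rw [hQR, ← Matrix.mul_assoc, hQ1, Matrix.one_mul]
    rw [this]
    exact hQsu.mul hinv
  haveI : Invertible R := hRu.invertible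
  haveI : Invertible A := hinv.invertible
  -- H commutes with A
  have hcomm : A * H = H * A := by
    have : A * H = Polynomial.aeval H (p * X) := by
      rw [_root_.map_mul, Polynomial.aeval_X]
    rw [this, mul_comm p X, _root_.map_mul, Polynomial.aeval_X]
  -- Qᴴ H Q = R H R⁻¹
  have hQe : Q = A * R⁻¹ := by
    rw [hQR, Matrix.mul_assoc, Matrix.mul_nonsing_inv R ((Matrix.isUnit_iff_isUnit_det _).mp hRu),
      Matrix.mul_one]
  have hQse : Qᴴ = R * A⁻¹ := by
    have : Qᴴ * A = R := by rw [hQR, ← Matrix.mul_assoc, hQ1, Matrix.one_mul]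
    calc Qᴴ = Qᴴ * A * A⁻¹ := by
          rw [Matrix.mul_assoc, Matrix.mul_nonsing_inv A ((Matrix.isUnit_iff_isUnit_det _).mp hinv),
            Matrix.mul_one]
      _ = R * A⁻¹ := by rw [this]
  have key : Qᴴ * H * Q = R * H * R⁻¹ := by
    rw [hQse, hQe]
    have : A⁻¹ * H * A = H := by
      rw [Matrix.mul_assoc, ← hcomm, ← Matrix.mul_assoc,
        Matrix.nonsing_inv_mul A ((Matrix.isUnit_iff_isUnit_det _).mp hinv), Matrix.one_mul]
    calc R * A⁻¹ * H * (A * R⁻¹) = R * (A⁻¹ * H * A) * R⁻¹ := by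
          simp only [Matrix.mul_assoc]
      _ = R * H * R⁻¹ := by rw [this]
  rw [key]
  -- R⁻¹ is upper triangular
  have hRbt : R.BlockTriangular (fun i : Fin n => (i : ℕ)) := fun i j h => hR i j (by
    exact Fin.lt_def.mpr h)
  have hRinv : R⁻¹.BlockTriangular (fun i : Fin n => (i : ℕ)) :=
    Matrix.blockTriangular_inv_of_blockTriangular hRbt
  -- now entrywise
  intro i j hij
  rw [Matrix.mul_apply]
  apply Finset.sum_eq_zero
  intro l _
  rcases lt_or_ge (l : ℕ) (j : ℕ) with hl | hl
  · -- fine either way; split on whether R⁻¹ l j = 0 or (R*H) i l = 0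
    -- here l < j is fine only if (R*H) i l = 0, need l + 1 < i
    have hli : (l : ℕ) + 1 < (i : ℕ) := by omega
    have : (R * H) i l = 0 := by
      rw [Matrix.mul_apply]
      apply Finset.sum_eq_zero
      intro k _
      rcases lt_or_ge (k : ℕ) (i : ℕ) with hk | hk
      · rw [hR i k (Fin.lt_def.mpr hk), zero_mul]
      · rw [hH k l (by omega), mul_zero]
    rw [this, zero_mul]
  · rcases lt_or_ge (j : ℕ) (l : ℕ) with hl2 | hl2
    · rw [hRinv hl2, mul_zero]
    · -- l = j, so need (R*H) i l = 0 since l + 1 = j + 1 < i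
      have : (R * H) i l = 0 := by
        rw [Matrix.mul_apply]
        apply Finset.sum_eq_zero
        intro k _
        rcases lt_or_ge (k : ℕ) (i : ℕ) with hk | hk
        · rw [hR i k (Fin.lt_def.mpr hk), zero_mul]
        · rw [hH k l (by omega), mul_zero]
      rw [this, zero_mul]
end

section
/- Let H be an n×n upper Hessenberg matrix, p a monic polynomial of degree k with p(H) = QR, Q unitary, R upper triangular, and p(H) invertible. Then ‖e_n* Q* p(H)‖ = ‖e_n* R‖ = ‖e_n* R^{-1} Q*‖^{-1} = ‖e_n* p(H)^{-1}‖^{-1}. -/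
open Matrix Polynomial

/-- Norm identities for the last row in a QR step. -/
theorem stmt_12 {n k : ℕ} (hn : 1 ≤ n)
    (H Q R : Matrix (Fin n) (Fin n) ℂ) (hH : IsHessenberg H)
    (p : Polynomial ℂ) (hmonic : p.Monic) (hdeg : p.natDegree = k)
    (hQ : Q ∈ Matrix.unitaryGroup (Fin n) ℂ)
    (hR : ∀ i j : Fin n, j < i → R i j = 0)
    (hinv : IsUnit (Polynomial.aeval H p))
    (hQR : Polynomial.aeval H p = Q * R) :
    rowNorm (Qᴴ * Polynomial.aeval H p) ⟨n - 1, by omega⟩ = rowNorm R ⟨n - 1, by omega⟩ ∧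
    rowNorm R ⟨n - 1, by omega⟩ = (rowNorm (R⁻¹ * Qᴴ) ⟨n - 1, by omega⟩)⁻¹ ∧
    (rowNorm (R⁻¹ * Qᴴ) ⟨n - 1, by omega⟩)⁻¹ =
      (rowNorm (Polynomial.aeval H p)⁻¹ ⟨n - 1, by omega⟩)⁻¹ := by
  set e : Fin n := ⟨n - 1, by omega⟩ with he
  set A := Polynomial.aeval H p with hA
  have hsQ : star Q * Q = 1 := hQ.1
  have hQs : Q * star Q = 1 := hQ.2
  have hQA : Qᴴ * A = R := by
    rw [hQR, ← Matrix.star_eq_conjTranspose, ← mul_assoc, hsQ, one_mul]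
  -- R is a unit
  have hRu : IsUnit R := by
    rw [Matrix.isUnit_iff_isUnit_det, ← hQA, Matrix.det_mul]
    have hdQ : Qᴴ.det * Q.det = 1 := by
      rw [← Matrix.det_mul, ← Matrix.star_eq_conjTranspose, hsQ, Matrix.det_one]
    exact (IsUnit.of_mul_eq_one _ hdQ).mul ((Matrix.isUnit_iff_isUnit_det A).mp hinv)
  haveI : Invertible R := hRu.invertible
  have hRtri : BlockTriangular R id := fun i j h => hR i j h
  have hRitri : BlockTriangular R⁻¹ id := blockTriangular_inv_of_blockTriangular hRtri
  have hlt : ∀ j : Fin n, j ≠ e → j < e := by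
    intro j hj
    have := j.isLt
    refine Fin.lt_def.mpr ?_
    have : (j : ℕ) ≠ n - 1 := fun h => hj (Fin.ext h)
    simp only [he]
    omega
  have hRrow : ∀ j : Fin n, j ≠ e → R e j = 0 := fun j hj => hR e j (hlt j hj)
  have hRirow : ∀ j : Fin n, j ≠ e → R⁻¹ e j = 0 := fun j hj => hRitri (hlt j hj)
  -- diagonal relation
  have hdiag : R e e * R⁻¹ e e = 1 := by
    have h := Matrix.mul_nonsing_inv R ((Matrix.isUnit_iff_isUnit_det R).mp hRu)
    have h2 := congrFun (congrFun h e) e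
    rw [Matrix.mul_apply] at h2
    rw [Finset.sum_eq_single e (fun j _ hj => by rw [hRrow j hj, zero_mul])
      (fun h => absurd (Finset.mem_univ e) h)] at h2
    simpa using h2
  -- norms
  have hnR : rowNorm R e = ‖R e e‖ := by
    rw [rowNorm, Finset.sum_eq_single e (fun j _ hj => by rw [hRrow j hj]; simp)
      (fun h => absurd (Finset.mem_univ e) h), Real.sqrt_sq (norm_nonneg _)]
  -- unit row of Qᴴ
  have hQrow : ∑ j, ‖Qᴴ e j‖ ^ 2 = 1 := by
    have h2 := congrFun (congrFun hsQ e) e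
    rw [Matrix.mul_apply] at h2
    have : ∀ j, (star Q) e j * Q j e = ((‖Qᴴ e j‖ ^ 2 : ℝ) : ℂ) := by
      intro j
      simp only [Matrix.star_apply, Matrix.conjTranspose_apply, norm_star, Complex.star_def]
      rw [← Complex.normSq_eq_conj_mul_self]
      norm_cast
      rw [Complex.normSq_eq_norm_sq, Complex.norm_conj]
    rw [Finset.sum_congr rfl (fun j _ => this j), Matrix.one_apply_eq] at h2
    push_cast at h2
    exact_mod_cast h2
  have hrowQi : ∀ j, (R⁻¹ * Qᴴ) e j = R⁻¹ e e * Qᴴ e j := by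
    intro j
    rw [Matrix.mul_apply]
    exact Finset.sum_eq_single e (fun m _ hm => by rw [hRirow m hm, zero_mul])
      (fun h => absurd (Finset.mem_univ e) h)
  have hnRi : rowNorm (R⁻¹ * Qᴴ) e = ‖R⁻¹ e e‖ := by
    rw [rowNorm]
    have : ∀ j : Fin n, ‖(R⁻¹ * Qᴴ) e j‖ ^ 2 = ‖R⁻¹ e e‖ ^ 2 * ‖Qᴴ e j‖ ^ 2 := by
      intro j; rw [hrowQi j, norm_mul, mul_pow]
    rw [Finset.sum_congr rfl (fun j _ => this j), ← Finset.mul_sum, hQrow, mul_one,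
      Real.sqrt_sq (norm_nonneg _)]
  have hAinv : A⁻¹ = R⁻¹ * Qᴴ := by
    rw [hQR, Matrix.mul_inv_rev, Matrix.inv_eq_left_inv hsQ, Matrix.star_eq_conjTranspose]
  refine ⟨by rw [hQA], ?_, by rw [hAinv]⟩
  rw [hnR, hnRi]
  have hnorm : ‖R e e‖ * ‖R⁻¹ e e‖ = 1 := by
    rw [← norm_mul, hdiag, norm_one]
  exact eq_inv_of_mul_eq_one_left hnorm
end

section
/- Let Z be a complex random variable, r ∈ ℂ, k ≥ 1, γ ∈ (0,1), ψ > 0, κ ≥ 1, α, θ ≥ 1. Suppose E[|Z - r|^{-2k}]^{1/2} ≤ κ/(γψ)^k and E[|Z - r|^{-k}] ≥ 1/(α^k θ^k ψ^k κ). Then E[|Z-r|^{-2k}] / E[|Z-r|^{-k}]² ≤ (αθ/γ)^{2k} κ⁴, and for every t ∈ (0,1), P[|Z - r| ≤ θα(κ/t)^{1/k}ψ] ≥ (1-t)² γ^{2k} / (α^{2k} θ^{2k} κ⁴). -/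
open MeasureTheory ENNReal

private lemma stmt_13_aux (α θ γ ψ κ : ℝ) (k : ℕ) (hγ0 : 0 < γ) (hψ : 0 < ψ) :
    κ ^ 2 / (γ ^ k * ψ ^ k) ^ 2 / (1 / (α ^ k * θ ^ k * ψ ^ k * κ)) ^ 2 ≤
      (α * θ / γ) ^ (2 * k) * κ ^ 4 := by
  rw [div_pow, mul_pow]
  field_simp
  ring_nf
  rw [mul_assoc (κ ^ 4 * α ^ (k * 2) * θ ^ (k * 2)), ← mul_pow, mul_inv_cancel₀ hγ0.ne', one_pow,
    mul_one]

/-- Stagnation implies support: two-sided inverse-moment bounds yield a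
reverse-Jensen inequality and mass on a disk of radius `≈ θα κ^{1/k} ψ`. -/
theorem stmt_13 {Ω : Type*} [MeasureSpace Ω] [IsProbabilityMeasure (volume : Measure Ω)]
    (Z : Ω → ℂ) (hZ : Measurable Z) (r : ℂ) {k : ℕ} (hk : 1 ≤ k)
    (havoid : ∀ᵐ ω, Z ω ≠ r)
    (γ ψ κ α θ : ℝ) (hγ : γ ∈ Set.Ioo (0 : ℝ) 1) (hψ : 0 < ψ) (hκ : 1 ≤ κ)
    (hα : 1 ≤ α) (hθ : 1 ≤ θ)
    (h2k : (∫⁻ ω, ((‖Z ω - r‖₊ : ℝ≥0∞)⁻¹) ^ (2 * k)) ^ (1/2 : ℝ) ≤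
      ENNReal.ofReal (κ / (γ * ψ) ^ k))
    (hkmom : ENNReal.ofReal (1 / (α ^ k * θ ^ k * ψ ^ k * κ)) ≤
      ∫⁻ ω, ((‖Z ω - r‖₊ : ℝ≥0∞)⁻¹) ^ k) :
    (∫⁻ ω, ((‖Z ω - r‖₊ : ℝ≥0∞)⁻¹) ^ (2 * k)) /
        (∫⁻ ω, ((‖Z ω - r‖₊ : ℝ≥0∞)⁻¹) ^ k) ^ 2 ≤
      ENNReal.ofReal ((α * θ / γ) ^ (2 * k) * κ ^ 4) ∧
    ∀ t : ℝ, t ∈ Set.Ioo (0 : ℝ) 1 →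
      ENNReal.ofReal ((1 - t) ^ 2 * γ ^ (2 * k) / (α ^ (2 * k) * θ ^ (2 * k) * κ ^ 4)) ≤
        volume {ω | ‖Z ω - r‖ ≤ θ * α * (κ / t) ^ ((k : ℝ)⁻¹) * ψ} := by

  obtain ⟨hγ0, hγ1⟩ := hγ
  have hα0 : (0:ℝ) < α := lt_of_lt_of_le one_pos hα
  have hθ0 : (0:ℝ) < θ := lt_of_lt_of_le one_pos hθ
  have hκ0 : (0:ℝ) < κ := lt_of_lt_of_le one_pos hκ
  have hk0 : (k:ℝ) ≠ 0 := by positivity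
  set f : Ω → ℝ≥0∞ := fun ω => ((‖Z ω - r‖₊ : ℝ≥0∞)⁻¹) ^ k with hfdef
  have hfm : Measurable f :=
    (((hZ.sub measurable_const).nnnorm.coe_nnreal_ennreal).inv).pow_const k
  set m1 : ℝ≥0∞ := ∫⁻ ω, f ω with hm1def
  set m2 : ℝ≥0∞ := ∫⁻ ω, ((‖Z ω - r‖₊ : ℝ≥0∞)⁻¹) ^ (2 * k) with hm2def
  have hm2f : m2 = ∫⁻ ω, f ω ^ (2:ℕ) := by
    simp only [hm2def, hfdef, ← pow_mul, mul_comm 2 k]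
  set D : ℝ := α ^ k * θ ^ k * ψ ^ k * κ with hDdef
  have hD0 : 0 < D := by positivity
  set B : ℝ := κ / (γ * ψ) ^ k with hBdef
  have hB0 : 0 < B := by positivity
  -- second moment bound
  have hm2B : m2 ≤ (ENNReal.ofReal B) ^ 2 := by
    have h : m2 = (m2 ^ (1/2 : ℝ)) ^ (2:ℕ) := by
      rw [← ENNReal.rpow_natCast (m2 ^ (1/2:ℝ)) 2, ← ENNReal.rpow_mul]
      norm_num
    rw [h]
    exact pow_le_pow_left' h2k 2
  have ha1 : ENNReal.ofReal (1 / D) ≤ m1 := hkmom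
  constructor
  · -- first conclusion
    have h1 : m2 / m1 ^ 2 ≤ (ENNReal.ofReal B) ^ 2 / (ENNReal.ofReal (1/D)) ^ 2 :=
      ENNReal.div_le_div hm2B (pow_le_pow_left' ha1 2)
    refine h1.trans ?_
    rw [← ENNReal.ofReal_pow hB0.le, ← ENNReal.ofReal_pow (by positivity : (0:ℝ) ≤ 1/D),
      ← ENNReal.ofReal_div_of_pos (by positivity)]
    apply ENNReal.ofReal_le_ofReal
    rw [hBdef, hDdef, mul_pow γ ψ, div_pow κ]
    exact stmt_13_aux α θ γ ψ κ k hγ0 hψ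
  · -- second conclusion
    intro t ht
    obtain ⟨ht0, ht1⟩ := ht
    set s : ℝ≥0∞ := ENNReal.ofReal (t / D) with hsdef
    set A : Set Ω := {ω | s ≤ f ω} with hAdef
    have hAmeas : MeasurableSet A := hfm measurableSet_Ici
    set R : ℝ := θ * α * (κ / t) ^ ((k : ℝ)⁻¹) * ψ with hRdef
    have hR0 : 0 < R := by
      have : (0:ℝ) < (κ / t) ^ ((k : ℝ)⁻¹) := Real.rpow_pos_of_pos (by positivity) _
      positivity
    -- A is contained in the disk event
    have hsub : A ⊆ {ω | ‖Z ω - r‖ ≤ R} := by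
      intro ω hω
      simp only [hAdef, Set.mem_setOf_eq] at hω ⊢
      rcases eq_or_lt_of_le (norm_nonneg (Z ω - r)) with hn | hn
      · linarith [hR0, hn]
      · -- positive norm case
        set n : ℝ := ‖Z ω - r‖ with hndef
        have hcoe : (‖Z ω - r‖₊ : ℝ≥0∞) = ENNReal.ofReal n := by
          rw [hndef, ofReal_norm]; rfl
        have hfω : f ω = ENNReal.ofReal (n⁻¹ ^ k) := by
          rw [hfdef]
          simp only
          rw [hcoe, ← ENNReal.ofReal_inv_of_pos hn, ← ENNReal.ofReal_pow (by positivity)]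
        rw [hfω, hsdef] at hω
        have hle : t / D ≤ n⁻¹ ^ k :=
          (ENNReal.ofReal_le_ofReal_iff (by positivity)).mp hω
        rw [inv_pow] at hle
        have hnk : n ^ k ≤ D / t := by
          have h2 := (le_inv_comm₀ (by positivity) (by positivity)).mp hle
          rwa [inv_div] at h2
        have hnn : n = (n ^ k) ^ ((k:ℝ)⁻¹) := by
          rw [← Real.rpow_natCast n k, ← Real.rpow_mul hn.le, mul_inv_cancel₀ hk0,
            Real.rpow_one]
        have hDt : D / t = (θ * α * ψ) ^ k * (κ / t) := by
          rw [hDdef, mul_pow, mul_pow]; ring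
        calc n = (n ^ k) ^ ((k:ℝ)⁻¹) := hnn
          _ ≤ (D / t) ^ ((k:ℝ)⁻¹) := Real.rpow_le_rpow (by positivity) hnk (by positivity)
          _ = R := by
              rw [hDt, Real.mul_rpow (by positivity) (by positivity),
                ← Real.rpow_natCast (θ * α * ψ) k, ← Real.rpow_mul (by positivity),
                mul_inv_cancel₀ hk0, Real.rpow_one, hRdef]
              ring
    -- Paley-Zygmund argument
    have hμA : volume A ≤ volume {ω | ‖Z ω - r‖ ≤ R} := measure_mono hsub
    set P : ℝ≥0∞ := volume A with hPdef
    -- key inequality : m1 ≤ s + B * P^{1/2}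
    have hcompl : ∫⁻ ω in Aᶜ, f ω ≤ s := by
      calc ∫⁻ ω in Aᶜ, f ω ≤ ∫⁻ _ in Aᶜ, s :=
            setLIntegral_mono' hAmeas.compl fun x hx => le_of_not_ge hx
        _ = s * volume Aᶜ := by rw [setLIntegral_const]
        _ ≤ s * 1 := by exact mul_le_mul_right prob_le_one s
        _ = s := mul_one s
    have hholder : ∫⁻ ω in A, f ω ≤ (ENNReal.ofReal B) * P ^ (1/2 : ℝ) := by
      have hconj : Real.HolderConjugate 2 2 := Real.HolderConjugate.two_two
      have hg : AEMeasurable (A.indicator (fun _ => (1:ℝ≥0∞))) volume :=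
        (measurable_const.indicator hAmeas).aemeasurable
      have H := ENNReal.lintegral_mul_le_Lp_mul_Lq volume hconj hfm.aemeasurable hg
      have hfg : ∀ ω, (f * A.indicator (fun _ => (1:ℝ≥0∞))) ω = A.indicator f ω := by
        intro ω
        by_cases hω : ω ∈ A <;> simp [Set.indicator_of_mem, Set.indicator_of_notMem, hω]
      have hL : ∫⁻ ω in A, f ω = ∫⁻ ω, (f * A.indicator (fun _ => (1:ℝ≥0∞))) ω := by
        rw [← lintegral_indicator hAmeas]
        exact lintegral_congr fun ω => (hfg ω).symm
      have hfp : ∫⁻ ω, f ω ^ (2:ℝ) = m2 := by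
        rw [hm2f]
        exact lintegral_congr fun ω => by rw [← ENNReal.rpow_natCast (f ω) 2]; norm_num
      have hgq : ∫⁻ ω, (A.indicator (fun _ => (1:ℝ≥0∞)) ω) ^ (2:ℝ) = P := by
        have : ∀ ω, (A.indicator (fun _ => (1:ℝ≥0∞)) ω) ^ (2:ℝ)
            = A.indicator (fun _ => (1:ℝ≥0∞)) ω := by
          intro ω
          by_cases hω : ω ∈ A <;>
            simp [Set.indicator_of_mem, Set.indicator_of_notMem, hω,
              ENNReal.rpow_two]
        rw [lintegral_congr this, lintegral_indicator hAmeas, setLIntegral_const, one_mul]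
      rw [hL]
      refine H.trans ?_
      rw [hfp, hgq]
      norm_num
      exact mul_le_mul_left h2k _
    have hkey : m1 ≤ s + (ENNReal.ofReal B) * P ^ (1/2 : ℝ) := by
      calc m1 = (∫⁻ ω in A, f ω) + ∫⁻ ω in Aᶜ, f ω := (lintegral_add_compl f hAmeas).symm
        _ ≤ (ENNReal.ofReal B) * P ^ (1/2 : ℝ) + s := add_le_add hholder hcompl
        _ = s + (ENNReal.ofReal B) * P ^ (1/2 : ℝ) := add_comm _ _
    -- cancel `s`
    have h1t : (0:ℝ) ≤ (1 - t) / D := div_nonneg (by linarith) hD0.le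
    have hlower : s + ENNReal.ofReal ((1 - t) / D) ≤ m1 := by
      rw [hsdef, ← ENNReal.ofReal_add (by positivity) h1t]
      have : t / D + (1 - t) / D = 1 / D := by ring
      rw [this]
      exact ha1
    have hcancel : ENNReal.ofReal ((1 - t) / D) ≤ (ENNReal.ofReal B) * P ^ (1/2 : ℝ) := by
      have := hlower.trans hkey
      rwa [ENNReal.add_le_add_iff_left (by simp [hsdef] : s ≠ ⊤)] at this
    set c : ℝ := (1 - t) / D / B with hcdef
    have hc0 : 0 < c := div_pos (div_pos (by linarith) hD0) hB0
    have hcP : ENNReal.ofReal c ≤ P ^ (1/2 : ℝ) := by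
      rw [hcdef, ENNReal.ofReal_div_of_pos hB0]
      exact ENNReal.div_le_of_le_mul' hcancel
    have hP : ENNReal.ofReal (c ^ 2) ≤ P := by
      have h2 : (ENNReal.ofReal c) ^ (2:ℕ) ≤ (P ^ (1/2:ℝ)) ^ (2:ℕ) := pow_le_pow_left' hcP 2
      rw [← ENNReal.ofReal_pow hc0.le, ← ENNReal.rpow_natCast (P ^ (1/2:ℝ)) 2,
        ← ENNReal.rpow_mul] at h2
      norm_num at h2
      exact h2
    refine le_trans ?_ (hP.trans hμA)
    apply ENNReal.ofReal_le_ofReal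
    have hceq : c = (1 - t) * γ ^ k / (α ^ k * θ ^ k * κ ^ 2) := by
      rw [hcdef, hDdef, hBdef]
      rw [mul_pow γ ψ]
      field_simp
    rw [hceq]
    rw [div_pow, mul_pow, mul_pow, mul_pow, ← pow_mul γ k 2, ← pow_mul α k 2,
      ← pow_mul θ k 2, ← pow_mul κ 2 2, mul_comm k 2]
end

section
/- Let M be the n×n matrix with M_{1,n} = β_n and M_{i+1,i} = β_i for 1 ≤ i ≤ n-1, all other entries zero, where β_1,…,β_n > 0. Then M = QR with Q the cyclic permutation matrix sending e_i ↦ e_{i+1 mod n} and R = diag(β_1,…,β_n), and the matrix Q* M Q has the same zero pattern as M with the β_i cyclically permuted: (Q* M Q)_{i+1,i} = β_{i+1} for 1 ≤ i ≤ n-1 and (Q* M Q)_{1,n} = β_1. -/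
open Matrix

/-- An unshifted QR step on the cyclic weighted-shift matrix cyclically
permutes the weights. -/
theorem stmt_17 {n : ℕ} [NeZero n] (β : Fin n → ℝ) (hβ : ∀ i, 0 < β i)
    (M Q R : Matrix (Fin n) (Fin n) ℂ)
    (hM : M = fun i j => if i = j + 1 then (β j : ℂ) else 0)
    (hQ : Q = fun i j => if i = j + 1 then (1 : ℂ) else 0)
    (hR : R = Matrix.diagonal fun i => (β i : ℂ)) :
    M = Q * R ∧
    Q ∈ Matrix.unitaryGroup (Fin n) ℂ ∧
    Qᴴ * M * Q = fun i j => if i = j + 1 then (β (j + 1) : ℂ) else 0 := by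
  replace hM : M = Matrix.of fun i j => if i = j + 1 then (β j : ℂ) else 0 := hM
  replace hQ : Q = Matrix.of fun i j => if i = j + 1 then (1 : ℂ) else 0 := hQ
  have hQM : Qᴴ * M = Matrix.diagonal fun i => (β i : ℂ) := by
    subst hQ hM
    ext i j
    simp only [mul_apply, conjTranspose_apply, apply_ite star, star_one, star_zero, ite_mul,
      one_mul, zero_mul, diagonal_apply, of_apply]
    rw [Finset.sum_eq_single (i + 1)]
    · rcases eq_or_ne i j with rfl | h
      · simp
      · simp [add_left_inj, eq_comm, h]
    · intro k _ hk
      simp [fun h : k = i + 1 => hk h]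
    · simp
  refine ⟨?_, ?_, ?_⟩
  · subst hQ hM hR
    ext i j
    simp only [mul_apply, diagonal_apply, ite_mul, one_mul, zero_mul, mul_ite, mul_zero, of_apply]
    rw [Finset.sum_eq_single j]
    · rcases eq_or_ne i (j + 1) with h | h <;> simp [h]
    · intro k _ hk
      simp [hk]
    · simp
  · constructor
    · show Qᴴ * Q = 1
      subst hQ
      ext i j
      simp only [mul_apply, conjTranspose_apply, apply_ite star, star_one, star_zero, ite_mul,
        one_mul, zero_mul, one_apply, of_apply]
      rw [Finset.sum_eq_single (i + 1)]
      · rcases eq_or_ne i j with rfl | h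
        · simp
        · simp [add_left_inj, eq_comm, h]
      · intro k _ hk
        simp [fun h : k = i + 1 => hk h]
      · simp
    · show Q * Qᴴ = 1
      subst hQ
      ext i j
      simp only [mul_apply, conjTranspose_apply, apply_ite star, star_one, star_zero, ite_mul,
        one_mul, zero_mul, mul_ite, mul_one, mul_zero, one_apply, of_apply]
      rcases eq_or_ne i j with rfl | h
      · rw [Finset.sum_eq_single (i - 1)]
        · simp [sub_add_cancel]
        · intro k _ hk
          rw [if_neg (fun h1 => hk (eq_sub_iff_add_eq.mpr h1.symm))]
        · simp
      · rw [Finset.sum_eq_zero, if_neg h]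
        intro k _
        by_cases h1 : i = k + 1
        · by_cases h2 : j = k + 1
          · exact absurd (h1.trans h2.symm) h
          · simp [h1, h2]
        · simp [h1]
  · rw [Matrix.mul_assoc, ← Matrix.mul_assoc, hQM]
    subst hQ
    ext i j
    simp only [mul_apply, diagonal_apply, ite_mul, zero_mul, mul_ite, mul_one, mul_zero, of_apply]
    rw [Finset.sum_eq_single i]
    · rcases eq_or_ne i (j + 1) with h | h <;> simp [h]
    · intro k _ hk
      have h2 : ¬ i = k := fun h => hk h.symm
      simp [h2]
    · simp
end
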